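/- Let f be a binary word of length n with a 2-tilde-error overlap of shift r with error positions i < j, and let α̃_r = pre_r(f)·O_i(f), where O_i is the operation (replacement or swap at position i) correcting the first error. Then α̃_r is f-free. -/
import Mathlib


/-- Edit operations on binary words: `R i` flips the bit at position `i`,
`S i` swaps the (distinct) bits at positions `i` and `i+1`. Positions are 0-based. -/
inductive TOp where
  | R (i : ℕ)
  | S (i : ℕ)
deriving DecidableEq

namespace TOp

def apply : TOp → List Bool → List Bool
  | R i, w => w.set i (!(w.getD i false))
  | S i, w => (w.set i (w.getD (i+1) false)).set (i+1) (w.getD i false)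

def valid : TOp → List Bool → Prop
  | R i, w => i < w.length
  | S i, w => i + 1 < w.length ∧ w.getD i false ≠ w.getD (i+1) false

/-- The set of positions modified by an operation. -/
def positions : TOp → Finset ℕ
  | R i => {i}
  | S i => {i, i+1}

/-- The (leftmost) position of an operation. -/
def pos : TOp → ℕ
  | R i => i
  | S i => i

def isR : TOp → Prop
  | R _ => True
  | S _ => False

def isS : TOp → Prop
  | R _ => False
  | S _ => True

end TOp

/-- All operations of a sequence are valid when applied successively starting from `w`. -/
def validSeq : List TOp → List Bool → Prop
  | [], _ => True
  | o :: os, w => o.valid w ∧ validSeq os (o.apply w)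

def applySeq : List TOp → List Bool → List Bool
  | [], w => w
  | o :: os, w => applySeq os (o.apply w)

/-- `ops` is a tilde-transformation from `u` to `v`. -/
def Transforms (ops : List TOp) (u v : List Bool) : Prop :=
  validSeq ops u ∧ applySeq ops u = v

/-- The swap-mismatch (tilde) distance between two words. -/
noncomputable def tdist (u v : List Bool) : ℕ :=
  sInf { n | ∃ ops : List TOp, ops.length = n ∧ Transforms ops u v }

/-- Each position of the word is modified at most once along the sequence. -/
def eachPosOnce (ops : List TOp) : Prop :=
  ops.Pairwise fun o o' => Disjoint o.positions o'.positions

/-- A minimal tilde-transformation: length `tdist u v`, each position changed at most once. -/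
def MinimalTransf (ops : List TOp) (u v : List Bool) : Prop :=
  Transforms ops u v ∧ ops.length = tdist u v ∧ eachPosOnce ops

/-- The list of all words `w_0 = u, w_1, …, w_h` visited by the transformation. -/
def trajectory (ops : List TOp) (u : List Bool) : List (List Bool) :=
  List.scanl (fun w o => o.apply w) u ops

/-- `w` avoids `f` as a factor. -/
def FFree (f w : List Bool) : Prop := ¬ f <:+: w

/-- All words along the transformation are `f`-free. -/
def FreeTransf (f : List Bool) (ops : List TOp) (u : List Bool) : Prop :=
  ∀ w ∈ trajectory ops u, FFree f w

/-- `f` is tilde-isometric. -/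
def TildeIsometric (f : List Bool) : Prop :=
  ∀ u v : List Bool, u.length = v.length → f.length < u.length →
    FFree f u → FFree f v →
      ∃ ops : List TOp, MinimalTransf ops u v ∧ FreeTransf f ops u

/-- `(u,v)` is a pair of tilde-witnesses for `f`. -/
def Witnesses (f u v : List Bool) : Prop :=
  u.length = v.length ∧ FFree f u ∧ FFree f v ∧ 2 ≤ tdist u v ∧
    ∀ ops : List TOp, MinimalTransf ops u v → ¬ FreeTransf f ops u

/-- Hamming distance between equal-length words (number of mismatch positions). -/
def hdist (u v : List Bool) : ℕ := ((u.zip v).filter fun p => p.1 != p.2).length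

namespace Stmt11Aux

lemma apply_length (o : TOp) (w : List Bool) : (o.apply w).length = w.length := by
  cases o <;> simp [TOp.apply]

lemma getD_set_eq (w : List Bool) (i : ℕ) (b : Bool) (hi : i < w.length) :
    (w.set i b).getD i false = b := by
  simp [List.getD_eq_getElem?_getD, List.getElem?_set, hi]

lemma getD_set_ne (w : List Bool) {i m : ℕ} (b : Bool) (him : i ≠ m) :
    (w.set i b).getD m false = w.getD m false := by
  simp [List.getD_eq_getElem?_getD, List.getElem?_set_ne him]

lemma applyR_getD (i : ℕ) (w : List Bool) (hi : i < w.length) (m : ℕ) :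
    ((TOp.R i).apply w).getD m false =
      if m = i then !(w.getD i false) else w.getD m false := by
  show (w.set i _).getD m false = _
  by_cases h : m = i
  · subst h; rw [getD_set_eq _ _ _ hi, if_pos rfl]
  · rw [getD_set_ne _ _ (Ne.symm h), if_neg h]

lemma applyS_getD (i : ℕ) (w : List Bool) (hi : i + 1 < w.length) (m : ℕ) :
    ((TOp.S i).apply w).getD m false =
      if m = i then w.getD (i+1) false
      else if m = i + 1 then w.getD i false
      else w.getD m false := by
  show ((w.set i _).set (i+1) _).getD m false = _
  by_cases h1 : m = i + 1
  · subst h1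
    rw [getD_set_eq _ _ _ (by simpa using hi), if_neg (by omega), if_pos rfl]
  · rw [getD_set_ne _ _ (Ne.symm h1)]
    by_cases h0 : m = i
    · subst h0
      rw [getD_set_eq _ _ _ (by omega), if_pos rfl]
    · rw [getD_set_ne _ _ (Ne.symm h0), if_neg h0, if_neg h1]

end Stmt11Aux

open Stmt11Aux in
theorem stmt11 (f : List Bool) (n r : ℕ) (o1 o2 : TOp) (hn : n = f.length)
    (hr1 : 1 ≤ r) (hr : r < n)
    (htrans : Transforms [o1, o2] (f.take (n - r)) (f.drop r))
    (hij : o1.pos < o2.pos)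
    (hdist2 : tdist (f.take (n - r)) (f.drop r) = 2) :
    FFree f (f.take r ++ o1.apply f) := by
  intro hinf
  obtain ⟨s, t, hst⟩ := hinf
  have hval := htrans.1
  simp only [validSeq] at hval
  obtain ⟨hv1, hv2, -⟩ := hval
  have happ := htrans.2
  simp only [applySeq] at happ
  set u : List Bool := f.take (n - r) with hudef
  set w1 : List Bool := o1.apply u with hw1def
  -- lengths
  have hfl : f.length = n := hn.symm
  have hul : u.length = n - r := by
    rw [hudef, List.length_take_of_le (by omega)]
  have hw1l : w1.length = n - r := by rw [hw1def, apply_length, hul]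
  have htr : (f.take r).length = r := List.length_take_of_le (by omega)
  set k := s.length with hk
  have hkr : k ≤ r := by
    have hlen := congrArg List.length hst
    simp only [List.length_append, apply_length, htr, hfl] at hlen
    omega
  -- pointwise facts
  have hocc : ∀ m, m < n → (f.take r ++ o1.apply f).getD (k + m) false = f.getD m false := by
    intro m hm
    rw [← hst, List.append_assoc, List.getD_eq_getElem?_getD,
      List.getElem?_append_right (by omega : s.length ≤ k + m)]
    have h1 : k + m - s.length = m := by omega
    rw [h1, List.getElem?_append_left (by omega : m < f.length),
      ← List.getD_eq_getElem?_getD]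
  have hpre : ∀ m, m + k < r → f.getD (m + k) false = f.getD m false := by
    intro m hm
    have h := hocc m (by omega)
    rw [List.getD_eq_getElem?_getD,
      List.getElem?_append_left (by rw [htr]; omega),
      List.getElem?_take_of_lt (by omega), ← List.getD_eq_getElem?_getD] at h
    rw [show m + k = k + m by omega]
    exact h
  have hsuf : ∀ x, x < n - (r - k) →
      (o1.apply f).getD x false = f.getD (x + (r - k)) false := by
    intro x hx
    have h := hocc (x + (r - k)) (by omega)
    rw [List.getD_eq_getElem?_getD,
      List.getElem?_append_right (by rw [htr]; omega)] at h
    rw [htr] at h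
    have h1 : k + (x + (r - k)) - r = x := by omega
    rw [h1, ← List.getD_eq_getElem?_getD] at h
    exact h
  have hugetD : ∀ x, x < n - r → u.getD x false = f.getD x false := by
    intro x hx
    rw [hudef, List.getD_eq_getElem?_getD, List.getElem?_take_of_lt hx,
      ← List.getD_eq_getElem?_getD]
  have hvdrop : ∀ x, (f.drop r).getD x false = f.getD (r + x) false := by
    intro x
    rw [List.getD_eq_getElem?_getD, List.getElem?_drop, ← List.getD_eq_getElem?_getD]
  have hC : ∀ x, (o2.apply w1).getD x false = f.getD (r + x) false := by
    intro x; rw [happ]; exact hvdrop x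
  have hw1G : ∀ x, x < n - r → w1.getD x false = (o1.apply f).getD x false := by
    intro x hx
    rw [hw1def]
    cases o1 with
    | R i =>
      have hi : i < n - r := by rw [← hul]; exact hv1
      rw [applyR_getD i u (by omega), applyR_getD i f (by omega)]
      by_cases hxi : x = i
      · subst hxi; rw [if_pos rfl, if_pos rfl, hugetD x hx]
      · rw [if_neg hxi, if_neg hxi, hugetD x hx]
    | S i =>
      obtain ⟨hi, -⟩ := hv1
      have hi' : i + 1 < n - r := by rw [← hul]; exact hi
      rw [applyS_getD i u (by omega), applyS_getD i f (by omega),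
        hugetD i (by omega), hugetD (i+1) (by omega)]
      by_cases h0 : x = i
      · simp [h0]
      · by_cases h1 : x = i + 1
        · simp [h0, h1]
        · rw [if_neg h0, if_neg h0, if_neg h1, if_neg h1, hugetD x hx]
  -- case analysis on k
  rcases eq_or_lt_of_le hkr with hkeq | hklt
  · -- k = r : o1 fixes f, impossible
    have hsuf' : ∀ x, x < n → (o1.apply f).getD x false = f.getD x false := by
      intro x hx
      have := hsuf x (by omega)
      rwa [show r - k = 0 by omega, Nat.add_zero] at this
    cases o1 with
    | R i =>
      have hi : i < n - r := by rw [← hul]; exact hv1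
      have h1 := hsuf' i (by omega)
      rw [applyR_getD i f (by omega), if_pos rfl] at h1
      simp at h1
    | S i =>
      obtain ⟨hi, hne⟩ := hv1
      have hi' : i + 1 < n - r := by rw [← hul]; exact hi
      rw [hugetD i (by omega), hugetD (i+1) (by omega)] at hne
      have h1 := hsuf' i (by omega)
      rw [applyS_getD i f (by omega), if_pos rfl] at h1
      exact hne h1.symm
  · rcases Nat.eq_zero_or_pos k with hk0 | hkpos
    · -- k = 0 : o2 fixes w1, impossible
      have hfix : ∀ x, x < n - r → (o2.apply w1).getD x false = w1.getD x false := by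
        intro x hx
        rw [hC x, hw1G x hx, hsuf x (by omega), hk0]
        congr 1
        omega
      cases o2 with
      | R j =>
        have hj : j < n - r := by rw [← hw1l]; exact hv2
        have h1 := hfix j hj
        rw [applyR_getD j w1 (by omega), if_pos rfl] at h1
        simp at h1
      | S j =>
        obtain ⟨hj, hne⟩ := hv2
        have hj' : j + 1 < n - r := by rw [← hw1l]; exact hj
        have h1 := hfix j (by omega)
        rw [applyS_getD j w1 (by omega), if_pos rfl] at h1
        exact hne h1.symm
    · -- middle case : 0 < k < r
      set r' := r - k with hr'def
      have hr'pos : 1 ≤ r' := by omega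
      have hB : ∀ x, x < n - r' → (o1.apply f).getD x false = f.getD (x + r') false := hsuf
      -- quasi-periodicity of period k below o2.pos + r'
      have hQ : ∀ m, m + k < n → m < o2.pos + r' → f.getD (m + k) false = f.getD m false := by
        intro m h1 h2
        by_cases hcase : m + k < r
        · exact hpre m hcase
        · have hsr : r' ≤ m := by omega
          have hs : m - r' < n - r := by omega
          have e1 : f.getD (m + k) false = (o2.apply w1).getD (m - r') false := by
            rw [hC (m - r')]
            congr 1
            omega
          have e2 : (o2.apply w1).getD (m - r') false = w1.getD (m - r') false := by
            cases o2 with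
            | R j =>
              have hj : j < n - r := by rw [← hw1l]; exact hv2
              rw [applyR_getD j w1 (by omega), if_neg (by simp only [TOp.pos] at h2; omega)]
            | S j =>
              obtain ⟨hj, -⟩ := hv2
              have hj' : j + 1 < n - r := by rw [← hw1l]; exact hj
              simp only [TOp.pos] at h2
              rw [applyS_getD j w1 (by omega), if_neg (by omega), if_neg (by omega)]
          have e3 := hw1G (m - r') hs
          have e4 := hB (m - r') (by omega)
          rw [e1, e2, e3, e4, show m - r' + r' = m by omega]
      -- final contradiction, by cases on o1
      cases o1 with
      | R i =>
        have hi : i < n - r := by rw [← hul]; exact hv1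
        have hij' : i < o2.pos := hij
        have e1 : f.getD (i + r') false = !(f.getD i false) := by
          rw [← hB i (by omega), applyR_getD i f (by omega), if_pos rfl]
        have e2 : f.getD (i + r' + k) false = f.getD (i + r') false :=
          hQ (i + r') (by omega) (by omega)
        have e3 : f.getD (i + k + r') false = f.getD (i + k) false := by
          rw [← hB (i + k) (by omega), applyR_getD i f (by omega), if_neg (by omega)]
        have e4 : f.getD (i + k) false = f.getD i false := hQ i (by omega) (by omega)
        rw [show i + r' + k = i + k + r' by omega, e3, e4] at e2
        rw [e2] at e1
        simp at e1
      | S i =>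
        obtain ⟨hi, hne⟩ := hv1
        have hi' : i + 1 < n - r := by rw [← hul]; exact hi
        have hij' : i < o2.pos := hij
        rw [hugetD i (by omega), hugetD (i+1) (by omega)] at hne
        have e4 : f.getD (i + k) false = f.getD i false := hQ i (by omega) (by omega)
        rcases Nat.lt_or_ge k 2 with hk1 | hk2
        · -- k = 1
          have : k = 1 := by omega
          rw [this] at e4
          exact hne e4.symm
        · have e1 : f.getD (i + r') false = f.getD (i + 1) false := by
            rw [← hB i (by omega), applyS_getD i f (by omega), if_pos rfl]
          have e2 : f.getD (i + r' + k) false = f.getD (i + r') false :=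
            hQ (i + r') (by omega) (by omega)
          have e3 : f.getD (i + k + r') false = f.getD (i + k) false := by
            rw [← hB (i + k) (by omega), applyS_getD i f (by omega),
              if_neg (by omega), if_neg (by omega)]
          rw [show i + r' + k = i + k + r' by omega, e3, e4] at e2
          rw [← e2] at e1
          exact hne e1
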